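/- arXiv:2007.08174 — 2 statements merged into one kernel-verified Lean document; each statement's English description precedes it below -/
import Mathlib

section
/- For every (w,ξ) ∈ ℝ × [0,∞) with (w,ξ) ≠ (0,0), the function w' ↦ ψ(w',ξ) is differentiable at w, with derivative ∂_wψ(w,ξ) = (ψ̂'(ξ)/ξ)·w if |w| < ξ, and ∂_wψ(w,ξ) = ψ̂'(|w|)·sign(w) if |w| ≥ ξ (with sign(0) = 0). Moreover the map (w,ξ) ↦ ∂_wψ(w,ξ) is continuous on (ℝ × [0,∞)) \ {(0,0)}. -/
/-- The cohesive density ψ(w,ξ) = ψ̂(|w|) if |w| ≥ ξ, and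
ψ(w,ξ) = ψ̂(ξ) − ψ̂'(ξ)·(ξ² − w²)/(2ξ) if |w| < ξ. -/
noncomputable def cohesive (psih psih' : ℝ → ℝ) (w ξ : ℝ) : ℝ :=
  if ξ ≤ |w| then psih |w| else psih ξ - psih' ξ * ((ξ ^ 2 - w ^ 2) / (2 * ξ))

/-- The partial derivative ∂_wψ(w,ξ): (ψ̂'(ξ)/ξ)·w if |w| < ξ, and
ψ̂'(|w|)·sign(w) if |w| ≥ ξ (with sign 0 = 0). -/
noncomputable def dpsiw (psih' : ℝ → ℝ) (w ξ : ℝ) : ℝ :=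
  if |w| < ξ then psih' ξ / ξ * w else psih' |w| * Real.sign w

/-!
Inside the band `|w| < ξ` the density is a quadratic in `w` whose value and slope at `w = ξ`
are `ψ̂(ξ)` and `ψ̂'(ξ)`, so it glues to `ψ̂(|w|)` in a `C¹` way; by evenness in `w` only
`w ≥ 0` needs to be treated. Both branches of `∂_wψ` are `ψ̂'(m) · w / m` with `m = max |w| ξ`,
which is continuous wherever `m > 0`.
-/

open Set

theorem Real.sign_eq_div_abs {w : ℝ} (hw : w ≠ 0) : Real.sign w = w / |w| := by
  rcases hw.lt_or_gt with h | h
  · rw [Real.sign_of_neg h, abs_of_neg h, div_neg, div_self h.ne]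
  · rw [Real.sign_of_pos h, abs_of_pos h, div_self h.ne']

theorem max_abs_pos_of_ne_zero {w ξ : ℝ} (hξ : 0 ≤ ξ) (h : (w, ξ) ≠ (0, 0)) :
    0 < max |w| ξ := by
  by_contra! hle
  obtain ⟨hw, hξ'⟩ := max_le_iff.1 hle
  exact h (Prod.ext (abs_nonpos_iff.1 hw) (le_antisymm hξ' hξ))

section Cohesive

variable {psih psih' : ℝ → ℝ}

theorem cohesive_neg (w ξ : ℝ) : cohesive psih psih' (-w) ξ = cohesive psih psih' w ξ := by
  simp only [cohesive, abs_neg, neg_sq]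

theorem dpsiw_neg (w ξ : ℝ) : dpsiw psih' (-w) ξ = -dpsiw psih' w ξ := by
  simp only [dpsiw, abs_neg, Real.sign_neg]
  split_ifs <;> ring

theorem cohesive_of_le_abs {w ξ : ℝ} (h : ξ ≤ |w|) :
    cohesive psih psih' w ξ = psih |w| :=
  if_pos h

theorem cohesive_of_abs_le {w ξ : ℝ} (h : |w| ≤ ξ) :
    cohesive psih psih' w ξ = psih ξ - psih' ξ * ((ξ ^ 2 - w ^ 2) / (2 * ξ)) := by
  unfold cohesive
  split_ifs with hle
  · have hw : |w| = ξ := le_antisymm h hle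
    rw [hw, ← sq_abs w, hw, sub_self, zero_div, mul_zero, sub_zero]
  · rfl

theorem hasDerivAt_quadratic (a b : ℝ) {ξ : ℝ} (hξ : ξ ≠ 0) (w : ℝ) :
    HasDerivAt (fun x => a - b * ((ξ ^ 2 - x ^ 2) / (2 * ξ))) (b / ξ * w) w := by
  have h := (((hasDerivAt_pow 2 w).const_sub (ξ ^ 2)).div_const (2 * ξ)).const_mul b
    |>.const_sub a
  refine h.congr_deriv ?_
  norm_num
  field_simp

theorem hasDerivAt_cohesive_of_abs_lt {w ξ : ℝ} (h : |w| < ξ) :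
    HasDerivAt (fun x => cohesive psih psih' x ξ) (dpsiw psih' w ξ) w := by
  rw [dpsiw, if_pos h]
  have hξ : ξ ≠ 0 := ((abs_nonneg w).trans_lt h).ne'
  refine (hasDerivAt_quadratic (psih ξ) _ hξ w).congr_of_eventuallyEq ?_
  filter_upwards [(isOpen_lt continuous_abs continuous_const).mem_nhds h] with x hx
  exact cohesive_of_abs_le (le_of_lt hx)

theorem hasDerivAt_cohesive_of_lt {w ξ : ℝ} (hw : 0 < w) (h : ξ < w)
    (hψ : HasDerivAt psih (psih' w) w) :
    HasDerivAt (fun x => cohesive psih psih' x ξ) (dpsiw psih' w ξ) w := by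
  rw [dpsiw, if_neg (by rw [abs_of_pos hw]; exact h.not_gt), abs_of_pos hw,
    Real.sign_of_pos hw, mul_one]
  refine hψ.congr_of_eventuallyEq ?_
  filter_upwards [Ioi_mem_nhds (max_lt hw h)] with x hx
  have hx : 0 < x ∧ ξ < x := max_lt_iff.1 hx
  rw [cohesive_of_le_abs (by rw [abs_of_pos hx.1]; exact hx.2.le), abs_of_pos hx.1]

theorem hasDerivAt_cohesive_self {ξ : ℝ} (hξ : 0 < ξ) (hψ : HasDerivAt psih (psih' ξ) ξ) :
    HasDerivAt (fun x => cohesive psih psih' x ξ) (dpsiw psih' ξ ξ) ξ := by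
  rw [dpsiw, if_neg (by rw [abs_of_pos hξ]; exact lt_irrefl ξ), abs_of_pos hξ,
    Real.sign_of_pos hξ, mul_one]
  have hleft : HasDerivWithinAt (fun x => cohesive psih psih' x ξ) (psih' ξ) (Iic ξ) ξ := by
    rw [← div_mul_cancel₀ (psih' ξ) hξ.ne']
    refine (hasDerivAt_quadratic _ _ hξ.ne' ξ).hasDerivWithinAt.congr_of_eventuallyEq ?_
      (cohesive_of_abs_le (abs_of_pos hξ).le)
    filter_upwards [self_mem_nhdsWithin,
      mem_nhdsWithin_of_mem_nhds (Ioi_mem_nhds (neg_lt_self hξ))] with x hxξ hx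
    exact cohesive_of_abs_le (abs_le.2 ⟨le_of_lt hx, hxξ⟩)
  have hright : HasDerivWithinAt (fun x => cohesive psih psih' x ξ) (psih' ξ) (Ici ξ) ξ := by
    have heq : ∀ x ∈ Ici ξ, cohesive psih psih' x ξ = psih x := fun x (hx : ξ ≤ x) => by
      rw [cohesive_of_le_abs (le_abs.2 (Or.inl hx)), abs_of_pos (hξ.trans_le hx)]
    exact hψ.hasDerivWithinAt.congr heq (heq ξ (mem_Ici.2 le_rfl))
  simpa only [Iic_union_Ici, hasDerivWithinAt_univ] using hleft.union hright

theorem hasDerivAt_cohesive_of_nonneg (hψ : ∀ x, 0 < x → HasDerivAt psih (psih' x) x)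
    {w ξ : ℝ} (hw : 0 ≤ w) (hpos : 0 < max w ξ) :
    HasDerivAt (fun x => cohesive psih psih' x ξ) (dpsiw psih' w ξ) w := by
  rcases lt_trichotomy w ξ with h | rfl | h
  · exact hasDerivAt_cohesive_of_abs_lt (by rwa [abs_of_nonneg hw])
  · rw [max_self] at hpos
    exact hasDerivAt_cohesive_self hpos (hψ w hpos)
  · rw [max_eq_left h.le] at hpos
    exact hasDerivAt_cohesive_of_lt hpos h (hψ w hpos)

theorem hasDerivAt_cohesive (hψ : ∀ x, 0 < x → HasDerivAt psih (psih' x) x)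
    {w ξ : ℝ} (hpos : 0 < max |w| ξ) :
    HasDerivAt (fun x => cohesive psih psih' x ξ) (dpsiw psih' w ξ) w := by
  rcases le_total 0 w with hw | hw
  · exact hasDerivAt_cohesive_of_nonneg hψ hw (by rwa [abs_of_nonneg hw] at hpos)
  · have h := (hasDerivAt_cohesive_of_nonneg hψ (neg_nonneg.2 hw)
      (by rwa [abs_of_nonpos hw] at hpos)).comp w (hasDerivAt_neg w)
    simpa only [Function.comp_def, cohesive_neg, dpsiw_neg, neg_neg, mul_neg_one] using h

theorem dpsiw_eq_of_max_pos {w ξ : ℝ} (h : 0 < max |w| ξ) :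
    dpsiw psih' w ξ = psih' (max |w| ξ) * (w / max |w| ξ) := by
  unfold dpsiw
  split_ifs with hlt
  · rw [max_eq_right hlt.le]
    ring
  · rw [max_eq_left (not_lt.1 hlt)] at h ⊢
    rw [Real.sign_eq_div_abs (abs_pos.1 h)]

theorem continuousOn_dpsiw (hψ' : ContinuousOn psih' (Ioi 0)) :
    ContinuousOn (fun p : ℝ × ℝ => dpsiw psih' p.1 p.2) {p | 0 < max |p.1| p.2} := by
  have hm : Continuous fun p : ℝ × ℝ => max |p.1| p.2 :=
    (continuous_abs.comp continuous_fst).max continuous_snd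
  refine ContinuousOn.congr ?_ fun p hp => dpsiw_eq_of_max_pos hp
  exact (hψ'.comp hm.continuousOn fun p hp => hp).mul
    (continuousOn_fst.div hm.continuousOn fun p hp => (hp : 0 < max |p.1| p.2).ne')

end Cohesive

theorem cohesive_hasDerivAt_w_general
    (psih psih' : ℝ → ℝ)
    (hC1 : ∀ w ∈ Set.Ici (0:ℝ), HasDerivWithinAt psih (psih' w) (Set.Ici 0) w)
    (hC1c : ContinuousOn psih' (Set.Ici 0)) :
    (∀ w ξ : ℝ, 0 ≤ ξ → (w, ξ) ≠ ((0:ℝ), (0:ℝ)) →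
        HasDerivAt (fun w' => cohesive psih psih' w' ξ) (dpsiw psih' w ξ) w) ∧
    ContinuousOn (fun p : ℝ × ℝ => dpsiw psih' p.1 p.2)
      ({p : ℝ × ℝ | 0 ≤ p.2} \ {((0:ℝ), (0:ℝ))}) := by
  have hψ : ∀ x, 0 < x → HasDerivAt psih (psih' x) x := fun x hx =>
    (hC1 x hx.le).hasDerivAt (Ici_mem_nhds hx)
  refine ⟨fun w ξ hξ hne => hasDerivAt_cohesive hψ (max_abs_pos_of_ne_zero hξ hne), ?_⟩
  exact (continuousOn_dpsiw (hC1c.mono Ioi_subset_Ici_self)).mono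
    fun p hp => max_abs_pos_of_ne_zero hp.1 hp.2

/-- away from the origin, ψ(·,ξ) is differentiable in w with derivative
∂_wψ, and ∂_wψ is continuous on (ℝ × [0,∞)) \ {(0,0)}. -/
theorem cohesive_hasDerivAt_w
    (ξc : ℝ) (hξc : 0 < ξc) (psih psih' psih'' : ℝ → ℝ)
    (hnn : ∀ w ≥ (0:ℝ), 0 ≤ psih w)
    (hconc : ConcaveOn ℝ (Set.Ici 0) psih)
    (h0 : psih 0 = 0)
    (hpos : ∀ w > (0:ℝ), 0 < psih w)
    (hconst : ∀ w ≥ ξc, psih w = psih ξc)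
    (hC1 : ∀ w ∈ Set.Ici (0:ℝ), HasDerivWithinAt psih (psih' w) (Set.Ici 0) w)
    (hC1c : ContinuousOn psih' (Set.Ici 0))
    (hC2 : ∀ w ∈ Set.Icc (0:ℝ) ξc, HasDerivWithinAt psih' (psih'' w) (Set.Icc 0 ξc) w)
    (hC2c : ContinuousOn psih'' (Set.Icc 0 ξc)) :
    (∀ w ξ : ℝ, 0 ≤ ξ → (w, ξ) ≠ ((0:ℝ), (0:ℝ)) →
        HasDerivAt (fun w' => cohesive psih psih' w' ξ) (dpsiw psih' w ξ) w) ∧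
    ContinuousOn (fun p : ℝ × ℝ => dpsiw psih' p.1 p.2)
      ({p : ℝ × ℝ | 0 ≤ p.2} \ {((0:ℝ), (0:ℝ))}) :=
  cohesive_hasDerivAt_w_general psih psih' hC1 hC1c
end

section
/- At every point (w,ξ) with 0 < ξ < ξ_c and |w| ≤ ξ, the density ψ is (jointly, Fréchet) differentiable, with partial derivatives ∂_wψ(w,ξ) = (ψ̂'(ξ)/ξ)·w and ∂_ξψ(w,ξ) = −(1/2)·(ψ̂''(ξ)·ξ − ψ̂'(ξ))·(ξ² − w²)/ξ². Moreover ∂_ξψ(w,ξ) ≥ 0 at all such points. -/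
/-!
On the open cone `|w| < ξ` the density is the smooth quadratic branch, whose partial derivatives
are the stated ones. On the boundary `|w| = ξ` the outer branch `ψ̂(|w|)` has the same value and,
because `ξ² − w² = 0` there, the same derivative, so the two branches glue to a Fréchet
differentiable function. The sign of `∂_ξψ` comes from concavity: `ψ̂'` is antitone, hence
`ψ̂'' ≤ 0`, and `ψ̂'` vanishes beyond `ξ_c`, hence `ψ̂' ≥ 0`.
-/

open Set Filter Topology

lemma HasFDerivAt.ite {E F : Type*} [NormedAddCommGroup E] [NormedSpace ℝ E]
    [NormedAddCommGroup F] [NormedSpace ℝ F] {P : E → Prop} [DecidablePred P]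
    {g h : E → F} {L : E →L[ℝ] F} {x : E}
    (hg : HasFDerivAt g L x) (hh : HasFDerivAt h L x) (hx : g x = h x) :
    HasFDerivAt (fun y => if P y then g y else h y) L x := by
  have hxval : (if P x then g x else h x) = g x := by rw [hx, ite_self]
  have hP : HasFDerivWithinAt (fun y => if P y then g y else h y) L {y | P y} x :=
    hg.hasFDerivWithinAt.congr (fun y hy => if_pos hy) hxval
  have hnP : HasFDerivWithinAt (fun y => if P y then g y else h y) L {y | P y}ᶜ x :=
    hh.hasFDerivWithinAt.congr (fun y hy => if_neg hy) (hxval.trans hx)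
  simpa using hP.union hnP

lemma HasDerivAt.nonpos_of_antitoneOn_of_mem_nhds {g : ℝ → ℝ} {g' x : ℝ} {s : Set ℝ}
    (hd : HasDerivAt g g' x) (hg : AntitoneOn g s) (hs : s ∈ 𝓝 x) : g' ≤ 0 := by
  have hacc : AccPt x (𝓟 s) := by
    simpa using (PerfectSpace.univ_preperfect x (mem_univ x)).nhds_inter hs
  exact hd.hasDerivWithinAt.nonpos_of_antitoneOn hacc hg

section

variable {f f' f'' : ℝ → ℝ}

lemma ConcaveOn.antitoneOn_of_hasDerivWithinAt {S : Set ℝ} (hfc : ConcaveOn ℝ S f)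
    (hf : ∀ x ∈ S, HasDerivWithinAt f (f' x) S x) : AntitoneOn f' S := by
  intro x hx y hy hxy
  rcases hxy.eq_or_lt with rfl | hlt
  · rfl
  exact (hfc.le_slope_of_hasDerivWithinAt hx hy hlt (hf y hy)).trans
    (hfc.slope_le_of_hasDerivWithinAt hx hy hlt (hf x hx))

lemma ConcaveOn.nonneg_of_hasDerivWithinAt_of_const_Ici {a c x : ℝ}
    (hfc : ConcaveOn ℝ (Ici a) f) (hf : ∀ x ∈ Ici a, HasDerivWithinAt f (f' x) (Ici a) x)
    (hconst : ∀ y ≥ c, f y = f c) (hx : a ≤ x) : 0 ≤ f' x := by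
  set y := max c x + 1
  have hxy : x < y := by grind
  have hcy : c < y := by grind
  have hfy : HasDerivAt f (f' y) y := (hf y (by grind)).hasDerivAt (Ici_mem_nhds (by grind))
  have hflat : f =ᶠ[𝓝 y] fun _ => f c :=
    eventually_of_mem (Ioi_mem_nhds hcy) fun t ht => hconst t (le_of_lt ht)
  have hzero : f' y = 0 := hfy.unique ((hasDerivAt_const y (f c)).congr_of_eventuallyEq hflat)
  simpa [hzero] using hfc.antitoneOn_of_hasDerivWithinAt hf hx (by grind) hxy.le

variable {w ξ : ℝ}

noncomputable def cohesiveFDeriv (f' f'' : ℝ → ℝ) (w ξ : ℝ) : ℝ × ℝ →L[ℝ] ℝ :=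
  (ContinuousLinearMap.fst ℝ ℝ ℝ).smulRight (f' ξ / ξ * w) +
    (ContinuousLinearMap.snd ℝ ℝ ℝ).smulRight
      (-(1 / 2) * (f'' ξ * ξ - f' ξ) * ((ξ ^ 2 - w ^ 2) / ξ ^ 2))

lemma hasFDerivAt_cohesive_inner (hf : HasDerivAt f (f' ξ) ξ) (hf' : HasDerivAt f' (f'' ξ) ξ)
    (hξ : ξ ≠ 0) :
    HasFDerivAt (fun p : ℝ × ℝ => f p.2 - f' p.2 * ((p.2 ^ 2 - p.1 ^ 2) / (2 * p.2)))
      (cohesiveFDeriv f' f'' w ξ) (w, ξ) := by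
  have hsnd := hasFDerivAt_snd (𝕜 := ℝ) (E := ℝ) (F := ℝ) (p := (w, ξ))
  have hfst := hasFDerivAt_fst (𝕜 := ℝ) (E := ℝ) (F := ℝ) (p := (w, ξ))
  have hinv : HasDerivAt (fun t : ℝ => (2 * t)⁻¹) (-(2 * 1) / (2 * ξ) ^ 2) ξ :=
    ((hasDerivAt_id ξ).const_mul 2).inv (by simpa using hξ)
  have hquot := ((hsnd.pow 2).fun_sub (hfst.pow 2)).fun_mul (hinv.comp_hasFDerivAt _ hsnd)
  simp only [div_eq_mul_inv]
  refine ((hf.comp_hasFDerivAt _ hsnd).fun_sub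
    ((hf'.comp_hasFDerivAt _ hsnd).fun_mul hquot)).congr_fderiv ?_
  refine ContinuousLinearMap.ext fun v => ?_
  simp only [cohesiveFDeriv, add_apply, sub_apply, smul_apply, Function.comp_apply,
    ContinuousLinearMap.smulRight_apply,
    ContinuousLinearMap.coe_fst', ContinuousLinearMap.coe_snd', smul_eq_mul, nsmul_eq_mul]
  field_simp
  ring

lemma hasFDerivAt_cohesive_outer (hf : HasDerivAt f (f' ξ) ξ) (hw : |w| = ξ) (hξ : 0 < ξ) :
    HasFDerivAt (fun p : ℝ × ℝ => f |p.1|) (cohesiveFDeriv f' f'' w ξ) (w, ξ) := by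
  subst hw
  have hcomp := hf.comp w (hasDerivAt_abs (abs_pos.mp hξ))
  refine (hcomp.comp_hasFDerivAt (f := Prod.fst) (w, |w|) hasFDerivAt_fst).congr_fderiv ?_
  have hsign : (SignType.sign w : ℝ) * |w| = w := sign_mul_abs w
  refine ContinuousLinearMap.ext fun v => ?_
  simp only [cohesiveFDeriv, sq_abs, sub_self, zero_div, mul_zero,
    ContinuousLinearMap.smulRight_zero, add_zero, smul_apply,
    ContinuousLinearMap.smulRight_apply, ContinuousLinearMap.coe_fst', smul_eq_mul]
  field_simp
  linear_combination f' |w| * v.1 * hsign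

lemma hasFDerivAt_cohesive (hf : HasDerivAt f (f' ξ) ξ) (hf' : HasDerivAt f' (f'' ξ) ξ)
    (hξ : 0 < ξ) (hw : |w| ≤ ξ) :
    HasFDerivAt (fun p : ℝ × ℝ => cohesive f f' p.1 p.2) (cohesiveFDeriv f' f'' w ξ) (w, ξ) := by
  have hinner := hasFDerivAt_cohesive_inner (w := w) hf hf' hξ.ne'
  unfold cohesive
  rcases hw.lt_or_eq with hlt | heq
  · refine hinner.congr_of_eventuallyEq ?_
    filter_upwards [(isOpen_lt continuous_fst.abs continuous_snd).mem_nhds hlt] with p hp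
    exact if_neg (not_le.mpr hp)
  · refine (hasFDerivAt_cohesive_outer hf heq hξ).ite hinner ?_
    have hsq : ξ ^ 2 - w ^ 2 = 0 := by rw [← heq, sq_abs, sub_self]
    simp [heq, hsq]

end

theorem cohesive_frechet_diff_interior_general
    (ξc : ℝ) (psih psih' psih'' : ℝ → ℝ)
    (hconc : ConcaveOn ℝ (Set.Ici 0) psih)
    (hconst : ∀ w ≥ ξc, psih w = psih ξc)
    (hC1 : ∀ w ∈ Set.Ici (0:ℝ), HasDerivWithinAt psih (psih' w) (Set.Ici 0) w)
    (hC2 : ∀ w ∈ Set.Icc (0:ℝ) ξc, HasDerivWithinAt psih' (psih'' w) (Set.Icc 0 ξc) w) :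
    ∀ w ξ : ℝ, 0 < ξ → ξ < ξc → |w| ≤ ξ →
      HasFDerivAt (fun p : ℝ × ℝ => cohesive psih psih' p.1 p.2)
        ((ContinuousLinearMap.fst ℝ ℝ ℝ).smulRight (psih' ξ / ξ * w) +
          (ContinuousLinearMap.snd ℝ ℝ ℝ).smulRight
            (-(1 / 2) * (psih'' ξ * ξ - psih' ξ) * ((ξ ^ 2 - w ^ 2) / ξ ^ 2)))
        (w, ξ) ∧
      0 ≤ -(1 / 2) * (psih'' ξ * ξ - psih' ξ) * ((ξ ^ 2 - w ^ 2) / ξ ^ 2) := by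
  intro w ξ hξ hξc hw
  have hψ : HasDerivAt psih (psih' ξ) ξ := (hC1 ξ hξ.le).hasDerivAt (Ici_mem_nhds hξ)
  have hψ' : HasDerivAt psih' (psih'' ξ) ξ :=
    (hC2 ξ ⟨hξ.le, hξc.le⟩).hasDerivAt (Icc_mem_nhds hξ hξc)
  have hψ'_nonneg : 0 ≤ psih' ξ := hconc.nonneg_of_hasDerivWithinAt_of_const_Ici hC1 hconst hξ.le
  have hψ''_nonpos : psih'' ξ ≤ 0 :=
    hψ'.nonpos_of_antitoneOn_of_mem_nhds (hconc.antitoneOn_of_hasDerivWithinAt hC1)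
      (Ici_mem_nhds hξ)
  have hw2 : w ^ 2 ≤ ξ ^ 2 := sq_le_sq' (abs_le.mp hw).1 (abs_le.mp hw).2
  refine ⟨hasFDerivAt_cohesive hψ hψ' hξ hw, ?_⟩
  exact mul_nonneg (by nlinarith) (div_nonneg (by linarith) (sq_nonneg ξ))

/-- at every (w,ξ) with 0 < ξ < ξ_c and |w| ≤ ξ, ψ is jointly (Fréchet)
differentiable with ∂_wψ(w,ξ) = (ψ̂'(ξ)/ξ)·w and
∂_ξψ(w,ξ) = −(1/2)·(ψ̂''(ξ)·ξ − ψ̂'(ξ))·(ξ² − w²)/ξ², and ∂_ξψ(w,ξ) ≥ 0. -/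
theorem cohesive_frechet_diff_interior
    (ξc : ℝ) (hξc : 0 < ξc) (psih psih' psih'' : ℝ → ℝ)
    (hnn : ∀ w ≥ (0:ℝ), 0 ≤ psih w)
    (hconc : ConcaveOn ℝ (Set.Ici 0) psih)
    (h0 : psih 0 = 0)
    (hpos : ∀ w > (0:ℝ), 0 < psih w)
    (hconst : ∀ w ≥ ξc, psih w = psih ξc)
    (hC1 : ∀ w ∈ Set.Ici (0:ℝ), HasDerivWithinAt psih (psih' w) (Set.Ici 0) w)
    (hC1c : ContinuousOn psih' (Set.Ici 0))
    (hC2 : ∀ w ∈ Set.Icc (0:ℝ) ξc, HasDerivWithinAt psih' (psih'' w) (Set.Icc 0 ξc) w)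
    (hC2c : ContinuousOn psih'' (Set.Icc 0 ξc)) :
    ∀ w ξ : ℝ, 0 < ξ → ξ < ξc → |w| ≤ ξ →
      HasFDerivAt (fun p : ℝ × ℝ => cohesive psih psih' p.1 p.2)
        ((ContinuousLinearMap.fst ℝ ℝ ℝ).smulRight (psih' ξ / ξ * w) +
          (ContinuousLinearMap.snd ℝ ℝ ℝ).smulRight
            (-(1 / 2) * (psih'' ξ * ξ - psih' ξ) * ((ξ ^ 2 - w ^ 2) / ξ ^ 2)))
        (w, ξ) ∧
      0 ≤ -(1 / 2) * (psih'' ξ * ξ - psih' ξ) * ((ξ ^ 2 - w ^ 2) / ξ ^ 2) :=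
  cohesive_frechet_diff_interior_general ξc psih psih' psih'' hconc hconst hC1 hC2
end
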